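/- arXiv:1006.3765 — 4 statements merged into one kernel-verified Lean document; each statement's English description precedes it below -/
import Mathlib

section
/- Let f : I → ℝ be q,ω-differentiable on I with D_{q,ω}f(t) = 0 for every t ∈ I. Then f is a constant function on I. Conversely, every constant function c on I is q,ω-differentiable with D_{q,ω}c(t) = 0 for all t ∈ I. -/
open Filter Topology

noncomputable section

/-- The fixed point `ω₀ := ω/(1-q)` of `t ↦ qt + ω`. -/
def hahnOmega0 (q ω : ℝ) : ℝ := ω / (1 - q)

/-- The Hahn difference operator `D_{q,ω}`:
`D_{q,ω}f(t) = (f(qt+ω) - f t)/((qt+ω) - t)` for `t ≠ ω₀`, and the ordinary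
derivative at `t = ω₀`. -/
def hahnDeriv (q ω : ℝ) (f : ℝ → ℝ) (t : ℝ) : ℝ :=
  if t = hahnOmega0 q ω then deriv f t
  else (f (q * t + ω) - f t) / ((q * t + ω) - t)

/-- `f` is `q,ω`-differentiable at `t` (automatic off `ω₀`; at `ω₀` it means
ordinary (Fréchet) differentiability). -/
def HahnDiffAt (q ω : ℝ) (f : ℝ → ℝ) (t : ℝ) : Prop :=
  t = hahnOmega0 q ω → DifferentiableAt ℝ f t

/-!
A vanishing Hahn derivative off `ω₀` says `f (qt + ω) = f t`, so `f` is constant along the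
orbit `t, qt + ω, …` of the contraction `t ↦ qt + ω`. The orbit is
`ω₀ + qⁿ (t - ω₀)`, which stays in `I` and tends to `ω₀`; continuity of `f` at `ω₀`
(it is differentiable there) then gives `f t = f ω₀`.
-/

theorem Set.MapsTo.apply_iterate_eq {α β : Type*} {σ : α → α} {f : α → β} {s : Set α}
    (hσ : Set.MapsTo σ s s) (hf : ∀ x ∈ s, f (σ x) = f x) {x : α} (hx : x ∈ s) (n : ℕ) :
    f (σ^[n] x) = f x := by
  induction n with
  | zero => rfl
  | succ n ih => rw [Function.iterate_succ_apply', hf _ (hσ.iterate n hx), ih]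

def hahnShift (q ω t : ℝ) : ℝ := q * t + ω

section HahnShift

variable {q ω : ℝ}

lemma hahnShift_eq (hq : q ≠ 1) (t : ℝ) :
    hahnShift q ω t = hahnOmega0 q ω + q * (t - hahnOmega0 q ω) := by
  have : 1 - q ≠ 0 := sub_ne_zero.2 hq.symm
  unfold hahnShift hahnOmega0
  field_simp
  ring

lemma hahnShift_hahnOmega0 (hq : q ≠ 1) : hahnShift q ω (hahnOmega0 q ω) = hahnOmega0 q ω := by
  rw [hahnShift_eq hq, sub_self, mul_zero, add_zero]

lemma hahnShift_sub_self (hq : q ≠ 1) (t : ℝ) :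
    hahnShift q ω t - t = (1 - q) * (hahnOmega0 q ω - t) := by
  rw [hahnShift_eq hq]
  ring

lemma iterate_hahnShift (hq : q ≠ 1) (n : ℕ) (t : ℝ) :
    (hahnShift q ω)^[n] t = hahnOmega0 q ω + q ^ n * (t - hahnOmega0 q ω) := by
  induction n with
  | zero => simp
  | succ n ih =>
    rw [Function.iterate_succ_apply', ih, hahnShift_eq hq]
    ring

lemma tendsto_iterate_hahnShift (hq0 : 0 ≤ q) (hq1 : q < 1) (t : ℝ) :
    Tendsto (fun n => (hahnShift q ω)^[n] t) atTop (𝓝 (hahnOmega0 q ω)) := by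
  simp_rw [iterate_hahnShift hq1.ne]
  simpa using tendsto_const_nhds.add
    ((tendsto_pow_atTop_nhds_zero_of_lt_one hq0 hq1).mul_const (t - hahnOmega0 q ω))

lemma mapsTo_hahnShift (hq0 : 0 ≤ q) (hq1 : q < 1) {I : Set ℝ} (hI : I.OrdConnected)
    (hmem : hahnOmega0 q ω ∈ I) : Set.MapsTo (hahnShift q ω) I I := fun t ht => by
  rw [hahnShift_eq hq1.ne]
  exact hI.convex.add_smul_sub_mem hmem ht ⟨hq0, hq1.le⟩

lemma apply_hahnShift_eq_of_hahnDeriv_eq_zero (hq : q ≠ 1) {f : ℝ → ℝ} {t : ℝ}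
    (h : hahnDeriv q ω f t = 0) : f (hahnShift q ω t) = f t := by
  unfold hahnDeriv at h
  split_ifs at h with ht
  · rw [ht, hahnShift_hahnOmega0 hq]
  · rw [div_eq_zero_iff, sub_eq_zero] at h
    refine h.resolve_right ?_
    rw [← hahnShift, hahnShift_sub_self hq]
    exact mul_ne_zero (sub_ne_zero.2 hq.symm) (sub_ne_zero.2 (Ne.symm ht))

theorem apply_eq_apply_hahnOmega0_of_hahnDeriv_eq_zero (hq0 : 0 ≤ q) (hq1 : q < 1)
    {I : Set ℝ} (hI : I.OrdConnected) (hmem : hahnOmega0 q ω ∈ I) {f : ℝ → ℝ}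
    (hf : ContinuousAt f (hahnOmega0 q ω)) (hz : ∀ t ∈ I, hahnDeriv q ω f t = 0)
    {t : ℝ} (ht : t ∈ I) : f t = f (hahnOmega0 q ω) := by
  have horbit : ∀ n, f ((hahnShift q ω)^[n] t) = f t :=
    (mapsTo_hahnShift hq0 hq1 hI hmem).apply_iterate_eq
      (fun s hs => apply_hahnShift_eq_of_hahnDeriv_eq_zero hq1.ne (hz s hs)) ht
  have hlim := hf.tendsto.comp (tendsto_iterate_hahnShift (ω := ω) hq0 hq1 t)
  simp only [Function.comp_def, horbit] at hlim
  exact tendsto_nhds_unique tendsto_const_nhds hlim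

end HahnShift

lemma hahnDeriv_const (q ω c t : ℝ) : hahnDeriv q ω (fun _ => c) t = 0 := by
  unfold hahnDeriv
  split_ifs <;> simp

theorem hahn_deriv_eq_zero_iff_const_general (q ω : ℝ) (hq0 : 0 < q) (hq1 : q < 1)
    (I : Set ℝ) (hI : I.OrdConnected) (hmem : hahnOmega0 q ω ∈ I) :
    (∀ f : ℝ → ℝ, (∀ t ∈ I, HahnDiffAt q ω f t) →
        (∀ t ∈ I, hahnDeriv q ω f t = 0) →
        ∀ s ∈ I, ∀ t ∈ I, f s = f t) ∧
    (∀ c : ℝ, ∀ t ∈ I,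
        HahnDiffAt q ω (fun _ => c) t ∧ hahnDeriv q ω (fun _ => c) t = 0) := by
  refine ⟨fun f hd hz s hs t ht => ?_,
    fun c t _ => ⟨fun _ => differentiableAt_const c, hahnDeriv_const q ω c t⟩⟩
  have hf : ContinuousAt f (hahnOmega0 q ω) := (hd _ hmem rfl).continuousAt
  rw [apply_eq_apply_hahnOmega0_of_hahnDeriv_eq_zero hq0.le hq1 hI hmem hf hz hs,
    apply_eq_apply_hahnOmega0_of_hahnDeriv_eq_zero hq0.le hq1 hI hmem hf hz ht]

/-- a `q,ω`-differentiable function on `I` with vanishing Hahn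
derivative is constant on `I`; conversely, every constant function is
`q,ω`-differentiable on `I` with vanishing Hahn derivative. -/
theorem hahn_deriv_eq_zero_iff_const (q ω : ℝ) (hq0 : 0 < q) (hq1 : q < 1)
    (hω : 0 < ω) (I : Set ℝ) (hI : I.OrdConnected) (hmem : hahnOmega0 q ω ∈ I) :
    (∀ f : ℝ → ℝ, (∀ t ∈ I, HahnDiffAt q ω f t) →
        (∀ t ∈ I, hahnDeriv q ω f t = 0) →
        ∀ s ∈ I, ∀ t ∈ I, f s = f t) ∧
    (∀ c : ℝ, ∀ t ∈ I,
        HahnDiffAt q ω (fun _ => c) t ∧ hahnDeriv q ω (fun _ => c) t = 0) :=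
  hahn_deriv_eq_zero_iff_const_general q ω hq0 hq1 I hI hmem
end
end

section
/- Let f : I → ℝ be continuous at ω₀, and define F(x) := ∫_{ω₀}^{x} f(t) d_{q,ω}t for x ∈ I. Then F is continuous at ω₀, F is q,ω-differentiable on I, and D_{q,ω}F(x) = f(x) for every x ∈ I. -/
open Filter Topology

noncomputable section

/-- The point `x q^k + [k]_{q,ω}` where `[k]_{q,ω} = ω(1-q^k)/(1-q)`. -/
def jnPoint (q ω x : ℝ) (k : ℕ) : ℝ := x * q ^ k + ω * (1 - q ^ k) / (1 - q)

/-- Partial sums of the Jackson–Nörlund series at `x`. -/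
def jnPartial (q ω : ℝ) (f : ℝ → ℝ) (x : ℝ) (n : ℕ) : ℝ :=
  ∑ k ∈ Finset.range n, q ^ k * f (jnPoint q ω x k)

/-- Convergence of the Jackson–Nörlund series `Σ q^k f(x q^k + [k]_{q,ω})`. -/
def JNConvergesAt (q ω : ℝ) (f : ℝ → ℝ) (x : ℝ) : Prop :=
  ∃ S : ℝ, Tendsto (jnPartial q ω f x) atTop (𝓝 S)

/-- The Jackson–Nörlund integral `∫_{ω₀}^{x} f(t) d_{q,ω}t`. -/
def jnSum (q ω : ℝ) (f : ℝ → ℝ) (x : ℝ) : ℝ :=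
  (x * (1 - q) - ω) * limUnder atTop (jnPartial q ω f x)

/-- The Jackson–Nörlund integral `∫_{a}^{b} f(t) d_{q,ω}t`. -/
def jnIntegral (q ω : ℝ) (f : ℝ → ℝ) (a b : ℝ) : ℝ :=
  jnSum q ω f b - jnSum q ω f a

/-- The orbit `{q^n s + [n]_{q,ω} : n ∈ ℕ}`. -/
def qwOrbit (q ω s : ℝ) : Set ℝ := Set.range (jnPoint q ω s)

/-- The orbit together with `ω₀`, i.e. `[s]_{q,ω}`. -/
def qwClosedOrbit (q ω s : ℝ) : Set ℝ := qwOrbit q ω s ∪ {hahnOmega0 q ω}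

/-- The `q,ω`-interval `[a,b]_{q,ω}`. -/
def qwInterval (q ω a b : ℝ) : Set ℝ :=
  qwOrbit q ω a ∪ qwOrbit q ω b ∪ {hahnOmega0 q ω}


/-! Write `F(x) = (1 - q)(x - ω₀) S(x)` with `S(x) = Σ q^k f(x q^k + [k]_{q,ω})`. The nodes of
`S(x)` converge geometrically to `ω₀`, so the series converges and, by dominated convergence, `S`
is continuous at `ω₀` with `S(ω₀) = f(ω₀)/(1 - q)`; hence `F'(ω₀) = (1 - q) S(ω₀) = f(ω₀)`.
Away from `ω₀`, splitting off the first term gives `S(x) = f(x) + q S(qx + ω)`, which is exactly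
`F(qx + ω) - F(x) = (qx + ω - x) f(x)`. -/

theorem hasDerivAt_sub_mul_of_continuousAt {g : ℝ → ℝ} {a : ℝ} (hg : ContinuousAt g a) :
    HasDerivAt (fun x => (x - a) * g x) (g a) a := by
  rw [hasDerivAt_iff_tendsto_slope]
  refine hg.continuousWithinAt.tendsto.congr' ?_
  filter_upwards [self_mem_nhdsWithin] with x hx
  rw [slope_def_field, sub_self, zero_mul, sub_zero, mul_div_cancel_left₀ _ (sub_ne_zero.2 hx)]

section JacksonNorlund

variable {q ω : ℝ}

theorem jnPoint_sub_hahnOmega0 (hq : q ≠ 1) (x : ℝ) (k : ℕ) :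
    jnPoint q ω x k - hahnOmega0 q ω = q ^ k * (x - hahnOmega0 q ω) := by
  have : 1 - q ≠ 0 := sub_ne_zero.2 hq.symm
  simp only [jnPoint, hahnOmega0]
  field_simp
  ring

@[simp]
theorem jnPoint_zero (x : ℝ) : jnPoint q ω x 0 = x := by
  simp [jnPoint]

theorem jnPoint_hahnOmega0 (hq : q ≠ 1) (k : ℕ) :
    jnPoint q ω (hahnOmega0 q ω) k = hahnOmega0 q ω := by
  simpa [sub_eq_zero] using jnPoint_sub_hahnOmega0 (ω := ω) hq (hahnOmega0 q ω) k

theorem jnPoint_shift (hq : q ≠ 1) (x : ℝ) (k : ℕ) :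
    jnPoint q ω (q * x + ω) k = jnPoint q ω x (k + 1) := by
  have : 1 - q ≠ 0 := sub_ne_zero.2 hq.symm
  simp only [jnPoint]
  field_simp
  ring

theorem one_sub_mul_hahnOmega0 (hq : q ≠ 1) : (1 - q) * hahnOmega0 q ω = ω :=
  mul_div_cancel₀ ω (sub_ne_zero.2 hq.symm)

theorem hahnShift_sub (hq : q ≠ 1) (x : ℝ) :
    q * x + ω - x = (1 - q) * (hahnOmega0 q ω - x) := by
  linear_combination (one_sub_mul_hahnOmega0 (ω := ω) hq).symm

theorem tendsto_jnPoint (hq : |q| < 1) (x : ℝ) :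
    Tendsto (jnPoint q ω x) atTop (𝓝 (hahnOmega0 q ω)) := by
  have h := ((tendsto_pow_atTop_nhds_zero_of_abs_lt_one hq).mul_const
    (x - hahnOmega0 q ω)).add_const (hahnOmega0 q ω)
  rw [zero_mul, zero_add] at h
  refine h.congr fun k => ?_
  rw [← jnPoint_sub_hahnOmega0 (abs_lt.1 hq).2.ne, sub_add_cancel]

theorem summable_jnTerm (hq : |q| < 1) {f : ℝ → ℝ} (hf : ContinuousAt f (hahnOmega0 q ω))
    (x : ℝ) : Summable fun k => q ^ k * f (jnPoint q ω x k) := by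
  have hbdd := (hf.tendsto.comp (tendsto_jnPoint hq x)).isBigO_one ℝ
  refine summable_of_isBigO_nat (summable_geometric_of_abs_lt_one hq).norm ?_
  simpa using (Asymptotics.isBigO_refl (fun k : ℕ => q ^ k) atTop).mul hbdd |>.norm_right

def jnSeries (q ω : ℝ) (f : ℝ → ℝ) (x : ℝ) : ℝ :=
  ∑' k : ℕ, q ^ k * f (jnPoint q ω x k)

theorem jnSum_eq_mul_jnSeries (hq : |q| < 1) {f : ℝ → ℝ}
    (hf : ContinuousAt f (hahnOmega0 q ω)) (x : ℝ) :
    jnSum q ω f x = (1 - q) * (x - hahnOmega0 q ω) * jnSeries q ω f x := by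
  have hlim : Tendsto (jnPartial q ω f x) atTop (𝓝 (jnSeries q ω f x)) :=
    (summable_jnTerm hq hf x).hasSum.tendsto_sum_nat
  rw [jnSum, hlim.limUnder_eq]
  linear_combination jnSeries q ω f x * one_sub_mul_hahnOmega0 (ω := ω) (abs_lt.1 hq).2.ne

theorem jnSeries_eq_add_jnSeries_shift (hq : |q| < 1) {f : ℝ → ℝ}
    (hf : ContinuousAt f (hahnOmega0 q ω)) (x : ℝ) :
    jnSeries q ω f x = f x + q * jnSeries q ω f (q * x + ω) := by
  rw [jnSeries, (summable_jnTerm hq hf x).tsum_eq_zero_add, jnSeries, ← tsum_mul_left]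
  simp only [jnPoint_shift (abs_lt.1 hq).2.ne, pow_succ, jnPoint_zero, pow_zero, one_mul]
  congr 2 with k
  ring

theorem jnSeries_hahnOmega0 (hq : |q| < 1) (f : ℝ → ℝ) :
    jnSeries q ω f (hahnOmega0 q ω) = f (hahnOmega0 q ω) / (1 - q) := by
  simp only [jnSeries, jnPoint_hahnOmega0 (abs_lt.1 hq).2.ne, tsum_mul_right,
    tsum_geometric_of_abs_lt_one hq, div_eq_inv_mul]

/- Dominated convergence: for `x` near `ω₀` every node `jnPoint q ω x k` is at least as near,
so the terms are dominated by `(‖f ω₀‖ + 1) |q|^k`. -/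
theorem continuousAt_jnSeries (hq : |q| < 1) {f : ℝ → ℝ}
    (hf : ContinuousAt f (hahnOmega0 q ω)) :
    ContinuousAt (jnSeries q ω f) (hahnOmega0 q ω) := by
  have hq1 := (abs_lt.1 hq).2.ne
  obtain ⟨δ, hδ, hfδ⟩ := Metric.eventually_nhds_iff.1
    (hf.norm.eventually (eventually_le_nhds (lt_add_one ‖f (hahnOmega0 q ω)‖)))
  refine tendsto_tsum_of_dominated_convergence
    ((summable_geometric_of_lt_one (abs_nonneg q) hq).mul_left (‖f (hahnOmega0 q ω)‖ + 1))
    (fun k => ?_) ?_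
  · have hnode : Continuous fun x => jnPoint q ω x k := by unfold jnPoint; fun_prop
    exact ((hf.comp_of_eq hnode.continuousAt (jnPoint_hahnOmega0 hq1 k)).const_mul _).tendsto
  · filter_upwards [Metric.ball_mem_nhds _ hδ] with x hx k
    rw [Metric.mem_ball, Real.dist_eq] at hx
    have hnode : dist (jnPoint q ω x k) (hahnOmega0 q ω) < δ := by
      rw [Real.dist_eq, jnPoint_sub_hahnOmega0 hq1, abs_mul, abs_pow]
      exact (mul_le_of_le_one_left (abs_nonneg _) (pow_le_one₀ (abs_nonneg q) hq.le)).trans_lt hx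
    rw [norm_mul, norm_pow, Real.norm_eq_abs]
    exact (mul_le_mul_of_nonneg_left (hfδ hnode) (by positivity)).trans_eq (mul_comm _ _)

theorem hasDerivAt_jnSum (hq : |q| < 1) {f : ℝ → ℝ} (hf : ContinuousAt f (hahnOmega0 q ω)) :
    HasDerivAt (jnSum q ω f) (f (hahnOmega0 q ω)) (hahnOmega0 q ω) := by
  have hq1 : 1 - q ≠ 0 := sub_ne_zero.2 (abs_lt.1 hq).2.ne'
  have h := hasDerivAt_sub_mul_of_continuousAt
    ((continuousAt_jnSeries hq hf).const_mul (1 - q))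
  rw [jnSeries_hahnOmega0 hq, mul_div_cancel₀ _ hq1] at h
  refine h.congr_of_eventuallyEq (Eventually.of_forall fun x => ?_)
  rw [jnSum_eq_mul_jnSeries hq hf]
  ring

theorem jnSum_shift_sub_jnSum (hq : |q| < 1) {f : ℝ → ℝ}
    (hf : ContinuousAt f (hahnOmega0 q ω)) (x : ℝ) :
    jnSum q ω f (q * x + ω) - jnSum q ω f x = (q * x + ω - x) * f x := by
  have hq1 := (abs_lt.1 hq).2.ne
  rw [jnSum_eq_mul_jnSeries hq hf, jnSum_eq_mul_jnSeries hq hf,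
    jnSeries_eq_add_jnSeries_shift hq hf x]
  linear_combination ((1 - q) * jnSeries q ω f (q * x + ω) - f x) *
    (one_sub_mul_hahnOmega0 (ω := ω) hq1).symm

end JacksonNorlund

theorem jn_fundamental_theorem_general (q ω : ℝ) (hq0 : 0 < q) (hq1 : q < 1)
    (I : Set ℝ)
    (f : ℝ → ℝ) (hf : ContinuousAt f (hahnOmega0 q ω)) :
    ContinuousAt (jnSum q ω f) (hahnOmega0 q ω) ∧
    ∀ x ∈ I, HahnDiffAt q ω (jnSum q ω f) x ∧
      hahnDeriv q ω (jnSum q ω f) x = f x := by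
  have hq : |q| < 1 := abs_lt.2 ⟨by linarith, hq1⟩
  have hderiv := hasDerivAt_jnSum hq hf
  refine ⟨hderiv.continuousAt, fun x _ => ⟨fun hx => hx ▸ hderiv.differentiableAt, ?_⟩⟩
  rcases eq_or_ne x (hahnOmega0 q ω) with rfl | hx
  · rw [hahnDeriv, if_pos rfl, hderiv.deriv]
  · have hstep : q * x + ω - x ≠ 0 := by
      rw [hahnShift_sub hq1.ne]
      exact mul_ne_zero (sub_ne_zero.2 hq1.ne') (sub_ne_zero.2 hx.symm)
    rw [hahnDeriv, if_neg hx, jnSum_shift_sub_jnSum hq hf, mul_div_cancel_left₀ _ hstep]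

/-- the Jackson–Nörlund indefinite integral
`F(x) = ∫_{ω₀}^x f(t) d_{q,ω}t` of a function continuous at `ω₀` is continuous
at `ω₀`, `q,ω`-differentiable on `I`, and `D_{q,ω}F = f` on `I`. -/
theorem jn_fundamental_theorem (q ω : ℝ) (hq0 : 0 < q) (hq1 : q < 1)
    (hω : 0 < ω) (I : Set ℝ) (hI : I.OrdConnected) (hmem : hahnOmega0 q ω ∈ I)
    (f : ℝ → ℝ) (hf : ContinuousAt f (hahnOmega0 q ω)) :
    ContinuousAt (jnSum q ω f) (hahnOmega0 q ω) ∧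
    ∀ x ∈ I, HahnDiffAt q ω (jnSum q ω f) x ∧
      hahnDeriv q ω (jnSum q ω f) x = f x :=
  jn_fundamental_theorem_general q ω hq0 hq1 I f hf
end
end

section
/- (Differentiation under the Jackson–Nörlund integral) Let s ∈ I with s ≠ ω₀, let θ₀ ∈ ℝ, ε̄ > 0, and let g : [s]_{q,ω} × (θ₀ − ε̄, θ₀ + ε̄) → ℝ. Assume: (i) g(t,·) is differentiable at θ₀ uniformly in t ∈ [s]_{q,ω}; (ii) G(θ) := ∫_{ω₀}^{s} g(t,θ) d_{q,ω}t exists for all θ in a neighbourhood of θ₀; (iii) ∫_{ω₀}^{s} ∂₂g(t,θ₀) d_{q,ω}t exists. Then G is differentiable at θ₀ and G′(θ₀) = ∫_{ω₀}^{s} ∂₂g(t,θ₀) d_{q,ω}t. -/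
open Filter Topology

noncomputable section

/-- `g(t,·)` is differentiable at `θ₀`, uniformly in `t ∈ S`, with
partial derivative `g' t = ∂₂g(t,θ₀)`. -/
def UnifDiffAt (g : ℝ → ℝ → ℝ) (S : Set ℝ) (θ₀ : ℝ) (g' : ℝ → ℝ) : Prop :=
  (∀ t ∈ S, HasDerivAt (g t) (g' t) θ₀) ∧
  ∀ ε > 0, ∃ δ > 0, ∀ θ : ℝ, 0 < |θ - θ₀| → |θ - θ₀| < δ →
    ∀ t ∈ S, |(g t θ - g t θ₀) / (θ - θ₀) - g' t| < ε

/-! The slope in `θ` of the integral is the integral of the slopes, by linearity of the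
convergent Jackson–Nörlund series. The map `f ↦ ∫_{ω₀}^{s} f d_{q,ω}t` is bounded in the sup norm
on the orbit of `s`, with constant `|s(1-q) - ω| / (1-q)` coming from the geometric weights `q^k`;
hence uniform convergence of the slopes to `∂₂g(·,θ₀)` passes to the integrals. -/

section JacksonNorlund

variable {q ω x : ℝ}

lemma jnPartial_sub (f h : ℝ → ℝ) :
    jnPartial q ω (f - h) x = jnPartial q ω f x - jnPartial q ω h x := by
  ext n
  simp only [jnPartial, Pi.sub_apply, mul_sub, Finset.sum_sub_distrib]

lemma jnPartial_smul (c : ℝ) (f : ℝ → ℝ) :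
    jnPartial q ω (c • f) x = c • jnPartial q ω f x := by
  ext n
  simp only [jnPartial, Pi.smul_apply, smul_eq_mul, Finset.mul_sum, mul_left_comm]

lemma JNConvergesAt.tendsto {f : ℝ → ℝ} (hf : JNConvergesAt q ω f x) :
    Tendsto (jnPartial q ω f x) atTop (𝓝 (limUnder atTop (jnPartial q ω f x))) :=
  tendsto_nhds_limUnder hf

lemma JNConvergesAt.sub {f h : ℝ → ℝ} (hf : JNConvergesAt q ω f x)
    (hh : JNConvergesAt q ω h x) : JNConvergesAt q ω (f - h) x :=
  ⟨_, by rw [jnPartial_sub]; exact hf.tendsto.sub hh.tendsto⟩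

lemma JNConvergesAt.const_smul {f : ℝ → ℝ} (hf : JNConvergesAt q ω f x) (c : ℝ) :
    JNConvergesAt q ω (c • f) x :=
  ⟨_, by rw [jnPartial_smul]; exact hf.tendsto.const_smul c⟩

lemma jnSum_sub {f h : ℝ → ℝ} (hf : JNConvergesAt q ω f x) (hh : JNConvergesAt q ω h x) :
    jnSum q ω (f - h) x = jnSum q ω f x - jnSum q ω h x := by
  have hlim : Tendsto (jnPartial q ω f x - jnPartial q ω h x) atTop _ :=
    hf.tendsto.sub hh.tendsto
  rw [jnSum, jnSum, jnSum, ← mul_sub, jnPartial_sub, hlim.limUnder_eq]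

lemma jnSum_const_smul {f : ℝ → ℝ} (hf : JNConvergesAt q ω f x) (c : ℝ) :
    jnSum q ω (c • f) x = c * jnSum q ω f x := by
  have hlim : Tendsto (c • jnPartial q ω f x) atTop _ := hf.tendsto.const_smul c
  rw [jnSum, jnSum, jnPartial_smul, hlim.limUnder_eq, smul_eq_mul, mul_left_comm]

lemma slope_fun_eq_smul_sub (g : ℝ → ℝ → ℝ) (a b : ℝ) :
    (fun t => slope (g t) a b) = (b - a)⁻¹ • ((fun t => g t b) - fun t => g t a) :=
  funext fun t => slope_def_module (g t) a b

lemma JNConvergesAt.slope {g : ℝ → ℝ → ℝ} {a b : ℝ}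
    (ha : JNConvergesAt q ω (fun t => g t a) x) (hb : JNConvergesAt q ω (fun t => g t b) x) :
    JNConvergesAt q ω (fun t => slope (g t) a b) x := by
  rw [slope_fun_eq_smul_sub]
  exact (hb.sub ha).const_smul _

lemma jnSum_slope {g : ℝ → ℝ → ℝ} {a b : ℝ} (ha : JNConvergesAt q ω (fun t => g t a) x)
    (hb : JNConvergesAt q ω (fun t => g t b) x) :
    jnSum q ω (fun t => slope (g t) a b) x = slope (fun θ => jnSum q ω (fun t => g t θ) x) a b := by
  rw [slope_fun_eq_smul_sub, jnSum_const_smul (hb.sub ha), jnSum_sub hb ha, slope_def_module,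
    smul_eq_mul]

lemma abs_jnPartial_le (hq0 : 0 ≤ q) (hq1 : q < 1) {f : ℝ → ℝ} {M : ℝ}
    (hM : ∀ k, |f (jnPoint q ω x k)| ≤ M) (n : ℕ) :
    |jnPartial q ω f x n| ≤ M / (1 - q) := by
  have hM0 : 0 ≤ M := (abs_nonneg _).trans (hM 0)
  calc |jnPartial q ω f x n|
      ≤ ∑ k ∈ Finset.range n, q ^ k * M := by
        refine (Finset.abs_sum_le_sum_abs _ _).trans (Finset.sum_le_sum fun k _ => ?_)
        rw [abs_mul, abs_of_nonneg (pow_nonneg hq0 k)]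
        exact mul_le_mul_of_nonneg_left (hM k) (pow_nonneg hq0 k)
    _ = (∑ k ∈ Finset.range n, q ^ k) * M := (Finset.sum_mul ..).symm
    _ ≤ q ^ 0 / (1 - q) * M := by
        rw [Finset.range_eq_Ico]
        exact mul_le_mul_of_nonneg_right (geom_sum_Ico_le_of_lt_one hq0 hq1) hM0
    _ = M / (1 - q) := by ring

lemma abs_jnSum_le (hq0 : 0 ≤ q) (hq1 : q < 1) {f : ℝ → ℝ} (hf : JNConvergesAt q ω f x)
    {M : ℝ} (hM : ∀ k, |f (jnPoint q ω x k)| ≤ M) :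
    |jnSum q ω f x| ≤ |x * (1 - q) - ω| / (1 - q) * M := by
  rw [jnSum, abs_mul, div_mul_eq_mul_div, mul_div_assoc]
  exact mul_le_mul_of_nonneg_left
    (le_of_tendsto hf.tendsto.abs (Eventually.of_forall (abs_jnPartial_le hq0 hq1 hM)))
    (abs_nonneg _)

theorem tendsto_jnSum_of_tendstoUniformlyOn {ι : Type*} {l : Filter ι} {F : ι → ℝ → ℝ}
    {f : ℝ → ℝ} (hq0 : 0 ≤ q) (hq1 : q < 1) (hF : TendstoUniformlyOn F f l (qwOrbit q ω x))
    (hFconv : ∀ᶠ i in l, JNConvergesAt q ω (F i) x) (hf : JNConvergesAt q ω f x) :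
    Tendsto (fun i => jnSum q ω (F i) x) l (𝓝 (jnSum q ω f x)) := by
  set K := |x * (1 - q) - ω| / (1 - q)
  have hK : 0 ≤ K := div_nonneg (abs_nonneg _) (sub_nonneg.2 hq1.le)
  rw [Metric.tendsto_nhds]
  intro ε hε
  have hε' : 0 < ε / (K + 1) := by positivity
  filter_upwards [Metric.tendstoUniformlyOn_iff.1 hF _ hε', hFconv] with i hclose hconv
  have hdiff : ∀ k, |(F i - f) (jnPoint q ω x k)| ≤ ε / (K + 1) := fun k => by
    rw [Pi.sub_apply, ← Real.dist_eq, dist_comm]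
    exact (hclose _ ⟨k, rfl⟩).le
  calc dist (jnSum q ω (F i) x) (jnSum q ω f x)
      = |jnSum q ω (F i - f) x| := by rw [Real.dist_eq, jnSum_sub hconv hf]
    _ ≤ K * (ε / (K + 1)) := abs_jnSum_le hq0 hq1 (hconv.sub hf) hdiff
    _ < ε := by
        rw [mul_div_assoc', div_lt_iff₀ (by positivity)]
        nlinarith

end JacksonNorlund

lemma UnifDiffAt.tendstoUniformlyOn_slope {g : ℝ → ℝ → ℝ} {S : Set ℝ} {θ₀ : ℝ}
    {g' : ℝ → ℝ} (h : UnifDiffAt g S θ₀ g') :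
    TendstoUniformlyOn (fun θ t => slope (g t) θ₀ θ) g' (𝓝[≠] θ₀) S := by
  rw [Metric.tendstoUniformlyOn_iff]
  intro ε hε
  obtain ⟨δ, hδ, hquot⟩ := h.2 ε hε
  filter_upwards [self_mem_nhdsWithin,
    nhdsWithin_le_nhds (Metric.ball_mem_nhds θ₀ hδ)] with θ hne hball t ht
  rw [dist_comm, Real.dist_eq, slope_def_field]
  exact hquot θ (abs_pos.2 (sub_ne_zero.2 hne)) hball t ht

theorem jn_deriv_under_integral_general (q ω : ℝ) (hq0 : 0 < q) (hq1 : q < 1)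
    (s : ℝ) (θ₀ : ℝ) (g : ℝ → ℝ → ℝ) (g' : ℝ → ℝ)
    (hunif : UnifDiffAt g (qwClosedOrbit q ω s) θ₀ g')
    (hG : ∃ δ > 0, ∀ θ : ℝ, |θ - θ₀| < δ →
        JNConvergesAt q ω (fun t => g t θ) s)
    (hg' : JNConvergesAt q ω g' s) :
    HasDerivAt (fun θ => jnSum q ω (fun t => g t θ) s) (jnSum q ω g' s) θ₀ := by
  obtain ⟨δ, hδ, hconv⟩ := hG
  have hconv_near : ∀ᶠ θ in 𝓝[≠] θ₀, JNConvergesAt q ω (fun t => g t θ) s :=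
    nhdsWithin_le_nhds (Metric.eventually_nhds_iff.2 ⟨δ, hδ, fun θ hθ => hconv θ hθ⟩)
  have hconv₀ : JNConvergesAt q ω (fun t => g t θ₀) s := hconv θ₀ (by simpa using hδ)
  rw [hasDerivAt_iff_tendsto_slope]
  refine (tendsto_jnSum_of_tendstoUniformlyOn hq0.le hq1
    (hunif.tendstoUniformlyOn_slope.mono Set.subset_union_left)
    (hconv_near.mono fun θ hθ => hconv₀.slope hθ) hg').congr'
    (hconv_near.mono fun θ hθ => jnSum_slope hconv₀ hθ)

/-- differentiation under the Jackson–Nörlund integral sign. -/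
theorem jn_deriv_under_integral (q ω : ℝ) (hq0 : 0 < q) (hq1 : q < 1)
    (hω : 0 < ω) (I : Set ℝ) (hI : I.OrdConnected) (hmem : hahnOmega0 q ω ∈ I)
    (s : ℝ) (hs : s ∈ I) (hsne : s ≠ hahnOmega0 q ω)
    (θ₀ εbar : ℝ) (hεbar : 0 < εbar) (g : ℝ → ℝ → ℝ) (g' : ℝ → ℝ)
    (hunif : UnifDiffAt g (qwClosedOrbit q ω s) θ₀ g')
    (hG : ∃ δ > 0, ∀ θ : ℝ, |θ - θ₀| < δ →
        JNConvergesAt q ω (fun t => g t θ) s)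
    (hg' : JNConvergesAt q ω g' s) :
    HasDerivAt (fun θ => jnSum q ω (fun t => g t θ) s) (jnSum q ω g' s) θ₀ :=
  jn_deriv_under_integral_general q ω hq0 hq1 s θ₀ g g' hunif hG hg'
end
end

section
/- (First variation formula) Let a, b ∈ I with a < b. Under the standing regularity assumptions, for every admissible y ∈ 𝔼 and every admissible variation h ∈ 𝔼, the function φ(ε) := ℒ[y + εh] is differentiable at ε = 0 and δℒ[y,h] := φ′(0) = ∫_{a}^{b} [ ∂₂f(t, y(qt+ω), D_{q,ω}y(t))·h(qt+ω) + ∂₃f(t, y(qt+ω), D_{q,ω}y(t))·D_{q,ω}h(t) ] d_{q,ω}t. -/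
open Filter Topology

noncomputable section

/-- Partial derivative of a Lagrangian `f(t,u,v)` in its second argument. -/
def pd2 (f : ℝ → ℝ → ℝ → ℝ) (t u v : ℝ) : ℝ := deriv (fun z => f t z v) u

/-- Partial derivative of a Lagrangian `f(t,u,v)` in its third argument. -/
def pd3 (f : ℝ → ℝ → ℝ → ℝ) (t u v : ℝ) : ℝ := deriv (fun z => f t u z) v

/-- The integrand `t ↦ f(t, y(qt+ω), D_{q,ω}y(t))`. -/
def lagComp (q ω : ℝ) (f : ℝ → ℝ → ℝ → ℝ) (y : ℝ → ℝ) (t : ℝ) : ℝ :=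
  f t (y (q * t + ω)) (hahnDeriv q ω y t)

/-- The variational functional `ℒ[y] = ∫_a^b f(t, y(qt+ω), D_{q,ω}y(t)) d_{q,ω}t`. -/
def varFunc (q ω a b : ℝ) (f : ℝ → ℝ → ℝ → ℝ) (y : ℝ → ℝ) : ℝ :=
  jnIntegral q ω (lagComp q ω f y) a b

/-- Membership in the space `𝔼`: continuous at `ω₀`, `q,ω`-differentiable on `I`,
with `D_{q,ω}y` bounded on `[a,b]_{q,ω}` and continuous at `ω₀`. -/
def VarMemE (q ω : ℝ) (I : Set ℝ) (a b : ℝ) (y : ℝ → ℝ) : Prop :=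
  ContinuousAt y (hahnOmega0 q ω) ∧
  (∀ t ∈ I, HahnDiffAt q ω y t) ∧
  (∃ M : ℝ, ∀ t ∈ qwInterval q ω a b, |hahnDeriv q ω y t| ≤ M) ∧
  ContinuousAt (hahnDeriv q ω y) (hahnOmega0 q ω)

/-- The norm `‖y‖₁ = sup_{[a,b]_{q,ω}} |y| + sup_{[a,b]_{q,ω}} |D_{q,ω}y|`. -/
def varNorm1 (q ω a b : ℝ) (y : ℝ → ℝ) : ℝ :=
  sSup ((fun t => |y t|) '' qwInterval q ω a b) +
    sSup ((fun t => |hahnDeriv q ω y t|) '' qwInterval q ω a b)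

/-- Admissible functions: members of `𝔼` with `y(a) = α`, `y(b) = β`. -/
def VarAdmissible (q ω : ℝ) (I : Set ℝ) (a b α β : ℝ) (y : ℝ → ℝ) : Prop :=
  VarMemE q ω I a b y ∧ y a = α ∧ y b = β

/-- Admissible variations: members of `𝔼` vanishing at `a` and `b`. -/
def VarAdmissibleVar (q ω : ℝ) (I : Set ℝ) (a b : ℝ) (h : ℝ → ℝ) : Prop :=
  VarMemE q ω I a b h ∧ h a = 0 ∧ h b = 0

/-- Regularity of the Lagrangian: `(u,v) ↦ f(t,u,v)` is `C¹` for each `t`, and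
the compositions with any `y ∈ 𝔼` (of `f`, `∂₂f`, `∂₃f`) are continuous at `ω₀`. -/
def LagrangianRegular (q ω : ℝ) (I : Set ℝ) (a b : ℝ) (f : ℝ → ℝ → ℝ → ℝ) : Prop :=
  (∀ t ∈ qwInterval q ω a b, ContDiff ℝ 1 (fun p : ℝ × ℝ => f t p.1 p.2)) ∧
  ∀ y : ℝ → ℝ, VarMemE q ω I a b y →
    ContinuousAt (lagComp q ω f y) (hahnOmega0 q ω) ∧
    ContinuousAt (fun t => pd2 f t (y (q * t + ω)) (hahnDeriv q ω y t)) (hahnOmega0 q ω) ∧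
    ContinuousAt (fun t => pd3 f t (y (q * t + ω)) (hahnDeriv q ω y t)) (hahnOmega0 q ω)

/-- `g(t,ε) = f(t, y(qt+ω) + ε h(qt+ω), D_{q,ω}y(t) + ε D_{q,ω}h(t))`. -/
def varied (q ω : ℝ) (f : ℝ → ℝ → ℝ → ℝ) (y h : ℝ → ℝ) (t ε : ℝ) : ℝ :=
  f t (y (q * t + ω) + ε * h (q * t + ω)) (hahnDeriv q ω y t + ε * hahnDeriv q ω h t)

/-- The first-variation integrand
`∂₂f(t, y(qt+ω), D_{q,ω}y t) h(qt+ω) + ∂₃f(t, y(qt+ω), D_{q,ω}y t) D_{q,ω}h t`. -/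
def varIntegrand (q ω : ℝ) (f : ℝ → ℝ → ℝ → ℝ) (y h : ℝ → ℝ) (t : ℝ) : ℝ :=
  pd2 f t (y (q * t + ω)) (hahnDeriv q ω y t) * h (q * t + ω) +
    pd3 f t (y (q * t + ω)) (hahnDeriv q ω y t) * hahnDeriv q ω h t

/-- The standing regularity assumptions for the functional associated to `f`. -/
def StandingAssumptions (q ω : ℝ) (I : Set ℝ) (a b α β : ℝ)
    (f : ℝ → ℝ → ℝ → ℝ) : Prop :=
  ∀ y : ℝ → ℝ, VarAdmissible q ω I a b α β y →
    ∀ h : ℝ → ℝ, VarAdmissibleVar q ω I a b h →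
      UnifDiffAt (varied q ω f y h) (qwClosedOrbit q ω a) 0 (varIntegrand q ω f y h) ∧
      UnifDiffAt (varied q ω f y h) (qwClosedOrbit q ω b) 0 (varIntegrand q ω f y h) ∧
      (∃ δ > 0, ∀ ε : ℝ, |ε| < δ →
        JNConvergesAt q ω (lagComp q ω f (fun s => y s + ε * h s)) a ∧
        JNConvergesAt q ω (lagComp q ω f (fun s => y s + ε * h s)) b) ∧
      JNConvergesAt q ω (varIntegrand q ω f y h) a ∧
      JNConvergesAt q ω (varIntegrand q ω f y h) b

/-- The Hahn quantum Euler–Lagrange equation for `f` along `y` on `[a,b]_{q,ω}`. -/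
def EulerLagrange (q ω a b : ℝ) (f : ℝ → ℝ → ℝ → ℝ) (y : ℝ → ℝ) : Prop :=
  ∀ t ∈ qwInterval q ω a b,
    hahnDeriv q ω (fun s => pd3 f s (y (q * s + ω)) (hahnDeriv q ω y s)) t =
      pd2 f t (y (q * t + ω)) (hahnDeriv q ω y t)

/-! The Jackson–Nörlund integral is a series with geometric weights `q^k`, so `φ'(0)` can be
computed term by term: uniform differentiability on the orbits `[a]_{q,ω}` and `[b]_{q,ω}`
keeps the difference quotient of every partial sum within `η/(1-q)` of the corresponding
partial sum of `∂₂g(·,0)`, independently of the number of terms, and this bound survives the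
limit. Linearity of `D_{q,ω}` identifies the integrand of `ℒ[y+εh]` with `g(·,ε)`. -/

open Finset

lemma hahnDeriv_add_const_mul {q ω : ℝ} {y h : ℝ → ℝ}
    (hy : DifferentiableAt ℝ y (hahnOmega0 q ω)) (hh : DifferentiableAt ℝ h (hahnOmega0 q ω))
    (ε t : ℝ) :
    hahnDeriv q ω (fun s => y s + ε * h s) t = hahnDeriv q ω y t + ε * hahnDeriv q ω h t := by
  unfold hahnDeriv
  split_ifs with ht
  · subst ht
    exact (hy.hasDerivAt.add (hh.hasDerivAt.const_mul ε)).deriv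
  · ring

lemma lagComp_add_const_mul {q ω : ℝ} (f : ℝ → ℝ → ℝ → ℝ) {y h : ℝ → ℝ}
    (hy : DifferentiableAt ℝ y (hahnOmega0 q ω)) (hh : DifferentiableAt ℝ h (hahnOmega0 q ω))
    (ε : ℝ) :
    lagComp q ω f (fun s => y s + ε * h s) = fun t => varied q ω f y h t ε := by
  funext t
  rw [lagComp, varied, hahnDeriv_add_const_mul hy hh]

lemma abs_sum_mul_le_of_abs_le {w c : ℕ → ℝ} {B η : ℝ} (hw : ∀ n, ∑ k ∈ range n, |w k| ≤ B)
    (hη : 0 ≤ η) (hc : ∀ k, |c k| ≤ η) (n : ℕ) :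
    |∑ k ∈ range n, w k * c k| ≤ B * η :=
  calc |∑ k ∈ range n, w k * c k|
      ≤ ∑ k ∈ range n, |w k| * η := by
        refine (abs_sum_le_sum_abs _ _).trans (sum_le_sum fun k _ => ?_)
        rw [abs_mul]
        exact mul_le_mul_of_nonneg_left (hc k) (abs_nonneg _)
    _ = (∑ k ∈ range n, |w k|) * η := by rw [sum_mul]
    _ ≤ B * η := mul_le_mul_of_nonneg_right (hw n) hη

lemma hasDerivAt_limUnder_weighted_sum {w : ℕ → ℝ} {B : ℝ}
    (hw : ∀ n, ∑ k ∈ range n, |w k| ≤ B) {F : ℕ → ℝ → ℝ} {F' : ℕ → ℝ} {θ₀ D : ℝ}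
    (hF : ∀ η > 0, ∃ δ > 0, ∀ θ : ℝ, 0 < |θ - θ₀| → |θ - θ₀| < δ →
      ∀ k, |(F k θ - F k θ₀) / (θ - θ₀) - F' k| < η)
    (hconv : ∀ᶠ θ in 𝓝 θ₀, ∃ L, Tendsto (fun n => ∑ k ∈ range n, w k * F k θ) atTop (𝓝 L))
    (hD : Tendsto (fun n => ∑ k ∈ range n, w k * F' k) atTop (𝓝 D)) :
    HasDerivAt (fun θ => limUnder atTop (fun n => ∑ k ∈ range n, w k * F k θ)) D θ₀ := by
  have hB : 0 ≤ B := by simpa using hw 0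
  obtain ⟨L₀, hL₀⟩ := hconv.self_of_nhds
  rw [hasDerivAt_iff_tendsto_slope, Metric.tendsto_nhds]
  intro ε hε
  obtain ⟨δ, hδ, hquot⟩ := hF (ε / (B + 1)) (by positivity)
  have hnear : ∀ᶠ θ in 𝓝[≠] θ₀, |θ - θ₀| < δ := nhdsWithin_le_nhds (eventually_abs_sub_lt θ₀ hδ)
  filter_upwards [self_mem_nhdsWithin, hnear, nhdsWithin_le_nhds hconv]
    with θ (hθ : θ ≠ θ₀) hθδ ⟨L, hL⟩
  have hθpos : 0 < |θ - θ₀| := abs_pos.mpr (sub_ne_zero.mpr hθ)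
  have hslope : slope (fun θ => limUnder atTop (fun n => ∑ k ∈ range n, w k * F k θ)) θ₀ θ
      = (L - L₀) / (θ - θ₀) := by
    rw [slope_def_field, hL.limUnder_eq, hL₀.limUnder_eq]
  have hpartial : Tendsto (fun n => ∑ k ∈ range n,
      w k * ((F k θ - F k θ₀) / (θ - θ₀) - F' k)) atTop (𝓝 ((L - L₀) / (θ - θ₀) - D)) := by
    convert ((hL.sub hL₀).div_const (θ - θ₀)).sub hD using 2 with n
    simp only [← sum_sub_distrib, sum_div]
    exact sum_congr rfl fun k _ => by ring
  have hbound : |(L - L₀) / (θ - θ₀) - D| ≤ B * (ε / (B + 1)) :=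
    le_of_tendsto hpartial.abs <| Eventually.of_forall <| abs_sum_mul_le_of_abs_le hw
      (by positivity) fun k => (hquot θ hθpos hθδ k).le
  rw [Real.dist_eq, hslope]
  calc _ ≤ B * (ε / (B + 1)) := hbound
    _ < ε := by rw [mul_div_assoc', div_lt_iff₀ (by positivity)]; nlinarith

lemma sum_range_abs_pow_le {q : ℝ} (hq0 : 0 ≤ q) (hq1 : q < 1) (n : ℕ) :
    ∑ k ∈ range n, |q ^ k| ≤ 1 / (1 - q) := by
  simp_rw [abs_of_nonneg (pow_nonneg hq0 _), range_eq_Ico]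
  simpa using geom_sum_Ico_le_of_lt_one (m := 0) (n := n) hq0 hq1

lemma hasDerivAt_jnSum_s11 {q ω x θ₀ : ℝ} (hq0 : 0 ≤ q) (hq1 : q < 1)
    {g : ℝ → ℝ → ℝ} {g' : ℝ → ℝ} (hg : UnifDiffAt g (qwClosedOrbit q ω x) θ₀ g')
    (hconv : ∀ᶠ θ in 𝓝 θ₀, JNConvergesAt q ω (fun t => g t θ) x)
    (hD : JNConvergesAt q ω g' x) :
    HasDerivAt (fun θ => jnSum q ω (fun t => g t θ) x) (jnSum q ω g' x) θ₀ := by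
  obtain ⟨D, hD⟩ := hD
  have horbit : ∀ k, jnPoint q ω x k ∈ qwClosedOrbit q ω x :=
    fun k => Or.inl (Set.mem_range_self k)
  have hquot : ∀ η > 0, ∃ δ > 0, ∀ θ : ℝ, 0 < |θ - θ₀| → |θ - θ₀| < δ →
      ∀ k, |(g (jnPoint q ω x k) θ - g (jnPoint q ω x k) θ₀) / (θ - θ₀)
        - g' (jnPoint q ω x k)| < η := fun η hη =>
    let ⟨δ, hδ, H⟩ := hg.2 η hη
    ⟨δ, hδ, fun θ h₁ h₂ k => H θ h₁ h₂ _ (horbit k)⟩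
  rw [jnSum, hD.limUnder_eq]
  exact (hasDerivAt_limUnder_weighted_sum (sum_range_abs_pow_le hq0 hq1) hquot hconv hD).const_mul _

lemma hasDerivAt_jnIntegral {q ω a b θ₀ : ℝ} (hq0 : 0 ≤ q) (hq1 : q < 1)
    {g : ℝ → ℝ → ℝ} {g' : ℝ → ℝ} (hga : UnifDiffAt g (qwClosedOrbit q ω a) θ₀ g')
    (hgb : UnifDiffAt g (qwClosedOrbit q ω b) θ₀ g')
    (hconv : ∀ᶠ θ in 𝓝 θ₀,
      JNConvergesAt q ω (fun t => g t θ) a ∧ JNConvergesAt q ω (fun t => g t θ) b)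
    (hDa : JNConvergesAt q ω g' a) (hDb : JNConvergesAt q ω g' b) :
    HasDerivAt (fun θ => jnIntegral q ω (fun t => g t θ) a b) (jnIntegral q ω g' a b) θ₀ :=
  (hasDerivAt_jnSum_s11 hq0 hq1 hgb (hconv.mono fun _ => And.right) hDb).sub
    (hasDerivAt_jnSum_s11 hq0 hq1 hga (hconv.mono fun _ => And.left) hDa)

theorem hahn_first_variation_general (q ω : ℝ) (hq0 : 0 < q) (hq1 : q < 1)
    (I : Set ℝ) (hmem : hahnOmega0 q ω ∈ I)
    (a b : ℝ) (α β : ℝ)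
    (f : ℝ → ℝ → ℝ → ℝ)
    (hstand : StandingAssumptions q ω I a b α β f)
    (y : ℝ → ℝ) (hy : VarAdmissible q ω I a b α β y)
    (h : ℝ → ℝ) (hh : VarAdmissibleVar q ω I a b h) :
    HasDerivAt (fun ε => varFunc q ω a b f (fun s => y s + ε * h s))
      (jnIntegral q ω (varIntegrand q ω f y h) a b) 0 := by
  obtain ⟨hud_a, hud_b, ⟨δ, hδ, hconv⟩, hDa, hDb⟩ := hstand y hy h hh
  have hvaried := lagComp_add_const_mul f (hy.1.2.1 _ hmem rfl) (hh.1.2.1 _ hmem rfl)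
  have hconv_near : ∀ᶠ ε in 𝓝 (0 : ℝ),
      JNConvergesAt q ω (fun t => varied q ω f y h t ε) a ∧
        JNConvergesAt q ω (fun t => varied q ω f y h t ε) b := by
    rw [Metric.eventually_nhds_iff]
    refine ⟨δ, hδ, fun ε hε => ?_⟩
    rw [← hvaried]
    exact hconv ε (by simpa using hε)
  simp only [varFunc, hvaried]
  exact hasDerivAt_jnIntegral hq0.le hq1 hud_a hud_b hconv_near hDa hDb

/-- the first variation formula. -/
theorem hahn_first_variation (q ω : ℝ) (hq0 : 0 < q) (hq1 : q < 1) (hω : 0 < ω)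
    (I : Set ℝ) (hI : I.OrdConnected) (hmem : hahnOmega0 q ω ∈ I)
    (a b : ℝ) (ha : a ∈ I) (hb : b ∈ I) (hab : a < b) (α β : ℝ)
    (f : ℝ → ℝ → ℝ → ℝ)
    (hreg : LagrangianRegular q ω I a b f)
    (hstand : StandingAssumptions q ω I a b α β f)
    (y : ℝ → ℝ) (hy : VarAdmissible q ω I a b α β y)
    (h : ℝ → ℝ) (hh : VarAdmissibleVar q ω I a b h) :
    HasDerivAt (fun ε => varFunc q ω a b f (fun s => y s + ε * h s))
      (jnIntegral q ω (varIntegrand q ω f y h) a b) 0 :=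
  hahn_first_variation_general q ω hq0 hq1 I hmem a b α β f hstand y hy h hh
end
end
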